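/- Let α : ℝ → ℝ be a polynomial function of degree at most 2 with |α(1) − α(0)| < 2π. Then ∫₀¹ exp(i·α(s)) ds ≠ 0. -/

import Mathlib

/-!
Completing the square turns `∫₀¹ exp(i α)` for a genuinely quadratic `α` into a rotated and
rescaled Fresnel integral `∫ₐᵇ exp(i t²)` with `a < b`. That integral never vanishes: for
`0 ≤ a`, the rotated integral `e^{-ia²} ∫ₐᵇ exp(i t²)` has imaginary part
`∫ₐᵇ sin(t² - a²) > 0`, as one sees by integrating by parts against the decreasing weight
`1 / (2t)`; an interval straddling `0` splits into two pieces whose imaginary parts are both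
positive, and an interval left of `0` is reflected. For affine `α = B s + C` the integral is
`e^{iC} (e^{iB} - 1) / (iB)`, which vanishes only when `B ∈ 2πℤ \ {0}`.
-/

open scoped Real

open intervalIntegral Set

open MeasureTheory (volume)

section SineIntegrals

open Real

theorem integral_sin_sq_sub_eq (θ : ℝ) {c b : ℝ} (hc : 0 < c) (hcb : c ≤ b) :
    ∫ t in c..b, sin (t ^ 2 - θ) =
      (1 - cos (b ^ 2 - θ)) / (2 * b) - (1 - cos (c ^ 2 - θ)) / (2 * c)
        + ∫ t in c..b, (1 - cos (t ^ 2 - θ)) / (2 * t ^ 2) := by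
  have hpos : ∀ t ∈ uIcc c b, t ≠ 0 := fun t ht =>
    (hc.trans_le (uIcc_of_le hcb ▸ ht).1).ne'
  have hderiv : ∀ t ∈ uIcc c b, HasDerivAt (fun t => (1 - cos (t ^ 2 - θ)) / (2 * t))
      (sin (t ^ 2 - θ) - (1 - cos (t ^ 2 - θ)) / (2 * t ^ 2)) t := by
    intro t ht
    have := ((((hasDerivAt_pow 2 t).sub_const θ).cos).const_sub 1).fun_div
      ((hasDerivAt_id' t).const_mul 2) (mul_ne_zero two_ne_zero (hpos t ht))
    refine this.congr_deriv ?_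
    field_simp [hpos t ht]
    ring
  have hq : ContinuousOn (fun t => (1 - cos (t ^ 2 - θ)) / (2 * t ^ 2)) (uIcc c b) :=
    ContinuousOn.div (by fun_prop) (by fun_prop) fun t ht => by simp [hpos t ht]
  have hsin : Continuous fun t => sin (t ^ 2 - θ) := by fun_prop
  rw [← integral_eq_sub_of_hasDerivAt hderiv
    ((hsin.intervalIntegrable c b).sub hq.intervalIntegrable),
    integral_sub (hsin.intervalIntegrable c b) hq.intervalIntegrable]
  ring

theorem integral_sin_sq_sub_sq_pos_of_pos {a b : ℝ} (ha : 0 < a) (hab : a < b) :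
    0 < ∫ t in a..b, sin (t ^ 2 - a ^ 2) := by
  rw [integral_sin_sq_sub_eq (a ^ 2) ha hab.le, sub_self, cos_zero, sub_self, zero_div, sub_zero]
  have hb : 0 < b := ha.trans hab
  have hend : 0 ≤ (1 - cos (b ^ 2 - a ^ 2)) / (2 * b) :=
    div_nonneg (sub_nonneg.2 (cos_le_one _)) (by positivity)
  set δ := min (b ^ 2 - a ^ 2) 1
  have hδ : 0 < δ := lt_min (by nlinarith) one_pos
  set t₀ := √(a ^ 2 + δ)
  have ht₀ : t₀ ^ 2 - a ^ 2 = δ := by rw [sq_sqrt (by positivity)]; ring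
  have ht₀_mem : t₀ ∈ Icc a b :=
    ⟨le_sqrt_of_sq_le (by linarith),
      sqrt_le_iff.2 ⟨hb.le, by linarith [min_le_left (b ^ 2 - a ^ 2) 1]⟩⟩
  have hcos : cos (t₀ ^ 2 - a ^ 2) < 1 := by
    rw [ht₀, ← cos_zero]
    exact cos_lt_cos_of_nonneg_of_le_pi le_rfl
      (by linarith [min_le_right (b ^ 2 - a ^ 2) 1, pi_gt_three]) hδ
  have hcont : ContinuousOn (fun t => (1 - cos (t ^ 2 - a ^ 2)) / (2 * t ^ 2)) (Icc a b) :=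
    ContinuousOn.div (by fun_prop) (by fun_prop) fun t ht => by
      have : 0 < t := ha.trans_le ht.1
      positivity
  have hmid : 0 < ∫ t in a..b, (1 - cos (t ^ 2 - a ^ 2)) / (2 * t ^ 2) := by
    simpa using integral_lt_integral_of_continuousOn_of_le_of_exists_lt hab continuousOn_const
      hcont (fun t _ => div_nonneg (sub_nonneg.2 (cos_le_one _)) (by positivity))
      ⟨t₀, ht₀_mem,
        div_pos (sub_pos.2 hcos) (by have := ha.trans_le ht₀_mem.1; positivity)⟩
  linarith

theorem integral_sin_sq_pos {b : ℝ} (hb : 0 < b) : 0 < ∫ t in (0:ℝ)..b, sin (t ^ 2) := by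
  have hint : ∀ x y : ℝ, IntervalIntegrable (fun t => sin (t ^ 2)) volume x y :=
    fun x y => (by fun_prop : Continuous fun t : ℝ => sin (t ^ 2)).intervalIntegrable x y
  rcases le_or_gt b 1 with hb1 | hb1
  · refine intervalIntegral_pos_of_pos_on (hint 0 b) (fun t ht => ?_) hb
    exact sin_pos_of_pos_of_lt_pi (by nlinarith [ht.1]) (by nlinarith [ht.1, ht.2, pi_gt_three])
  -- On `[0, 1]` the bound `sin x ≥ x - x³/6` gives more than `1/4`; the tail beyond `1`
  -- loses at most `(1 - cos 1) / 2 ≤ 1/4`.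
  rw [← integral_add_adjacent_intervals (hint 0 1) (hint 1 b)]
  have hhead : 1 / 4 < ∫ t in (0:ℝ)..1, sin (t ^ 2) :=
    calc (1:ℝ) / 4 < ∫ t in (0:ℝ)..1, (t ^ 2 - (t ^ 2) ^ 3 / 6) := by
          norm_num [← pow_mul, integral_sub, integral_pow, integral_div]
      _ ≤ ∫ t in (0:ℝ)..1, sin (t ^ 2) :=
          integral_mono_on zero_le_one
            ((by fun_prop : Continuous fun t : ℝ => t ^ 2 - (t ^ 2) ^ 3 / 6).intervalIntegrable _ _)
            (hint 0 1) fun t _ => sin_ge_sub_cube (sq_nonneg t)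
  have htail : -(1 / 4) ≤ ∫ t in (1:ℝ)..b, sin (t ^ 2) := by
    have h := integral_sin_sq_sub_eq 0 one_pos hb1.le
    simp only [sub_zero, one_pow, mul_one] at h
    have hcos1 : 1 - cos 1 ≤ 1 / 2 := by linarith [one_sub_sq_div_two_le_cos (x := 1)]
    have hend : 0 ≤ (1 - cos (b ^ 2)) / (2 * b) :=
      div_nonneg (sub_nonneg.2 (cos_le_one _)) (by positivity)
    have hmid : 0 ≤ ∫ t in (1:ℝ)..b, (1 - cos (t ^ 2)) / (2 * t ^ 2) :=
      integral_nonneg hb1.le fun t _ => div_nonneg (sub_nonneg.2 (cos_le_one _)) (by positivity)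
    linarith
  linarith

theorem integral_sin_sq_sub_sq_pos {a b : ℝ} (ha : 0 ≤ a) (hab : a < b) :
    0 < ∫ t in a..b, sin (t ^ 2 - a ^ 2) := by
  rcases ha.eq_or_lt with rfl | ha
  · simpa using integral_sin_sq_pos hab
  · exact integral_sin_sq_sub_sq_pos_of_pos ha hab

end SineIntegrals

section ExpIntegrals

open Complex

theorem im_integral_exp_I_mul {f : ℝ → ℝ} (hf : Continuous f) (a b : ℝ) :
    (∫ t in a..b, cexp (I * f t)).im = ∫ t in a..b, Real.sin (f t) := by
  have h := intervalIntegral_im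
    ((by fun_prop : Continuous fun t => cexp (I * f t)).intervalIntegrable (μ := volume) a b)
  simp only [RCLike.im_to_complex] at h
  rw [← h]
  congr with t
  rw [mul_comm, exp_ofReal_mul_I_im]

theorem integral_exp_I_mul_sq_ne_zero_of_nonneg {a b : ℝ} (ha : 0 ≤ a) (hab : a < b) :
    ∫ t in a..b, cexp (I * ↑(t ^ 2)) ≠ 0 := by
  intro h
  have hrot : ∫ t in a..b, cexp (I * ↑(t ^ 2 - a ^ 2)) =
      cexp (-(I * ↑(a ^ 2))) * ∫ t in a..b, cexp (I * ↑(t ^ 2)) := by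
    rw [← integral_const_mul]
    congr with t
    rw [← Complex.exp_add]
    push_cast
    ring_nf
  have := im_integral_exp_I_mul (f := fun t => t ^ 2 - a ^ 2) (by fun_prop) a b
  rw [hrot, h, mul_zero, zero_im] at this
  exact (integral_sin_sq_sub_sq_pos ha hab).ne this

theorem integral_exp_I_mul_sq_ne_zero {a b : ℝ} (hab : a < b) :
    ∫ t in a..b, cexp (I * ↑(t ^ 2)) ≠ 0 := by
  rcases le_or_gt 0 a with ha | ha
  · exact integral_exp_I_mul_sq_ne_zero_of_nonneg ha hab
  rcases le_or_gt b 0 with hb | hb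
  · have := integral_exp_I_mul_sq_ne_zero_of_nonneg (neg_nonneg.2 hb) (neg_lt_neg hab)
    have h := integral_comp_neg (a := a) (b := b) fun t => cexp (I * ↑(t ^ 2))
    simp only [neg_sq] at h
    rwa [h]
  · intro h
    have := im_integral_exp_I_mul (f := fun t => t ^ 2) (by fun_prop) a b
    have hint : ∀ x y : ℝ, IntervalIntegrable (fun t => Real.sin (t ^ 2)) volume x y :=
      fun x y => (by fun_prop : Continuous fun t : ℝ => Real.sin (t ^ 2)).intervalIntegrable x y
    rw [h, zero_im, ← integral_add_adjacent_intervals (hint a 0) (hint 0 b)] at this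
    have hneg : ∫ t in a..0, Real.sin (t ^ 2) = ∫ t in (0:ℝ)..(-a), Real.sin (t ^ 2) := by
      have h := integral_comp_neg (a := a) (b := 0) fun t => Real.sin (t ^ 2)
      simp only [neg_sq, neg_zero] at h
      exact h
    rw [hneg] at this
    linarith [integral_sin_sq_pos hb, integral_sin_sq_pos (neg_pos.2 ha)]

theorem integral_exp_I_mul_quadratic_ne_zero_of_pos {A : ℝ} (hA : 0 < A) (B C : ℝ) {u v : ℝ}
    (huv : u < v) : ∫ s in u..v, cexp (I * ↑(A * s ^ 2 + B * s + C)) ≠ 0 := by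
  set d := √A
  have hd : 0 < d := Real.sqrt_pos.2 hA
  set e := B / (2 * d)
  have hsplit : ∀ s : ℝ, cexp (I * ↑(A * s ^ 2 + B * s + C)) =
      cexp (I * ↑(C - e ^ 2)) * cexp (I * ↑((d * s + e) ^ 2)) := by
    intro s
    have hsq : A * s ^ 2 + B * s + C = (C - e ^ 2) + (d * s + e) ^ 2 := by
      simp only [e]
      field_simp
      rw [Real.sq_sqrt hA.le]
      ring
    rw [hsq, ← Complex.exp_add, ofReal_add, mul_add]
  simp only [hsplit, integral_const_mul,
    integral_comp_mul_add (fun t => cexp (I * ↑(t ^ 2))) hd.ne']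
  exact mul_ne_zero (Complex.exp_ne_zero _) (smul_ne_zero (inv_ne_zero hd.ne')
    (integral_exp_I_mul_sq_ne_zero (by gcongr)))

theorem integral_exp_I_mul_quadratic_ne_zero {A : ℝ} (hA : A ≠ 0) (B C : ℝ) {u v : ℝ}
    (huv : u < v) : ∫ s in u..v, cexp (I * ↑(A * s ^ 2 + B * s + C)) ≠ 0 := by
  rcases hA.lt_or_gt with hA | hA
  · have h := integral_exp_I_mul_quadratic_ne_zero_of_pos (neg_pos.2 hA) (-B) (-C) huv
    have hconj : ∀ s : ℝ, cexp (I * ↑(A * s ^ 2 + B * s + C)) =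
        starRingEnd ℂ (cexp (I * ↑(-A * s ^ 2 + -B * s + -C))) := by
      intro s
      rw [← Complex.exp_conj, map_mul, conj_I, conj_ofReal]
      push_cast
      ring_nf
    simpa only [hconj, intervalIntegral_conj, map_ne_zero] using h
  · exact integral_exp_I_mul_quadratic_ne_zero_of_pos hA B C huv

theorem integral_exp_I_mul_affine_ne_zero {B : ℝ} (hB : |B| < 2 * π) (C : ℝ) :
    ∫ s in (0:ℝ)..1, cexp (I * ↑(B * s + C)) ≠ 0 := by
  have hsplit : ∀ s : ℝ, cexp (I * ↑(B * s + C)) = cexp (I * C) * cexp ((I * B) * s) := by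
    intro s
    rw [← Complex.exp_add]
    push_cast
    ring_nf
  simp only [hsplit, integral_const_mul]
  refine mul_ne_zero (Complex.exp_ne_zero _) ?_
  rcases eq_or_ne B 0 with rfl | hB0
  · simp
  have hIB : I * B ≠ 0 := mul_ne_zero I_ne_zero (ofReal_ne_zero.2 hB0)
  rw [integral_exp_mul_complex hIB]
  refine div_ne_zero (sub_ne_zero.2 ?_) hIB
  simp only [ofReal_one, mul_one, ofReal_zero, mul_zero, Complex.exp_zero]
  rw [Ne, Complex.exp_eq_one_iff]
  rintro ⟨n, hn⟩
  have hBn : B = n * (2 * π) := by simpa using congrArg im hn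
  rw [hBn, abs_mul, abs_of_pos Real.two_pi_pos] at hB
  have hn : |(n : ℝ)| < 1 := by nlinarith [Real.two_pi_pos]
  have hn0 : n = 0 := Int.abs_lt_one_iff.mp (by exact_mod_cast hn)
  exact hB0 (by simp [hBn, hn0])

end ExpIntegrals

/-- If `α` is a polynomial of degree at most 2 with `|α(1) − α(0)| < 2π`,
then `∫₀¹ exp(i·α(s)) ds ≠ 0`. -/
theorem integral_exp_clothoid_ne_zero
    (P : Polynomial ℝ) (hP : P.natDegree ≤ 2)
    (h : |P.eval 1 - P.eval 0| < 2 * π) :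
    (∫ s in (0:ℝ)..1, Complex.exp (Complex.I * (P.eval s))) ≠ 0 := by
  rw [Polynomial.eq_quadratic_of_degree_le_two (Polynomial.natDegree_le_iff_degree_le.1 hP)] at h ⊢
  simp only [Polynomial.eval_add, Polynomial.eval_mul, Polynomial.eval_C, Polynomial.eval_pow,
    Polynomial.eval_X] at h ⊢
  rcases eq_or_ne (P.coeff 2) 0 with hA | hA
  · simp only [hA, zero_mul, zero_add] at h ⊢
    exact integral_exp_I_mul_affine_ne_zero (by simpa using h) _
  · exact integral_exp_I_mul_quadratic_ne_zero hA _ _ zero_lt_one
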